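/- arXiv:2206.12302 — 8 statements merged into one kernel-verified Lean document; each statement's English description precedes it below -/
import Mathlib

section
/- Suppose a : primes → ℝ satisfies ∑_{p ≤ x} a(p)² ∼ x/log x and ∑_{p ≤ x} a(p)⁴ ∼ 2x/log x as x → ∞. Then ∑_{x < p ≤ 2x} |a(p)| ≫ x/log x for all sufficiently large x; in particular ∑_{p ≤ x} |a(p)| ≫ x/log x. -/
open Finset Filter Asymptotics

/-!
Cauchy–Schwarz twice gives `(∑ a²)³ ≤ (∑ |a|)² · ∑ a⁴` on every finite set. On the
dyadic range `(x, 2x]` the hypotheses, together with `2x / log 2x ~ 2 · x / log x`, give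
`∑ a² ~ x / log x` and `∑ a⁴ ~ 2x / log x`, hence `(∑ |a|)² ≫ (x / log x)³ / (x / log x)`.
The bound for `p ≤ x` is the dyadic one at `x / 2`.
-/

theorem Finset.sum_sq_pow_three_le {ι : Type*} (s : Finset ι) (f : ι → ℝ) :
    (∑ i ∈ s, f i ^ 2) ^ 3 ≤ (∑ i ∈ s, |f i|) ^ 2 * ∑ i ∈ s, f i ^ 4 := by
  set A := ∑ i ∈ s, |f i|
  set B := ∑ i ∈ s, f i ^ 2
  set C := ∑ i ∈ s, |f i| ^ 3
  set D := ∑ i ∈ s, f i ^ 4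
  have hAC : B ^ 2 ≤ A * C := sum_sq_le_sum_mul_sum_of_sq_le_mul s (fun i _ => abs_nonneg _)
    (fun i _ => by positivity) fun i _ => le_of_eq <| by
      rw [show |f i| * |f i| ^ 3 = (|f i| ^ 2) ^ 2 by ring, sq_abs]
  have hBD : C ^ 2 ≤ B * D := sum_sq_le_sum_mul_sum_of_sq_le_mul s (fun i _ => by positivity)
    (fun i _ => by positivity) fun i _ => le_of_eq <| by
      rw [show (|f i| ^ 3) ^ 2 = (|f i| ^ 2) ^ 3 by ring, sq_abs]; ring
  rcases (show 0 ≤ B from sum_nonneg fun i _ => sq_nonneg (f i)).eq_or_lt with hB | hB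
  · rw [← hB, zero_pow three_ne_zero]; positivity
  refine le_of_mul_le_mul_left ?_ hB
  calc B * B ^ 3 = (B ^ 2) ^ 2 := by ring
    _ ≤ (A * C) ^ 2 := pow_le_pow_left₀ (sq_nonneg B) hAC 2
    _ = A ^ 2 * C ^ 2 := by ring
    _ ≤ A ^ 2 * (B * D) := by gcongr
    _ = B * (A ^ 2 * D) := by ring

theorem Finset.sum_filter_Ioc_eq_sub (P : ℕ → Prop) [DecidablePred P] (f : ℕ → ℝ) {m n : ℕ}
    (hmn : m ≤ n) :
    ∑ p ∈ (Ioc m n).filter P, f p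
      = ∑ p ∈ (range (n + 1)).filter P, f p - ∑ p ∈ (range (m + 1)).filter P, f p := by
  simp only [sum_filter]
  rw [← Ico_add_one_add_one_eq_Ioc, ← sum_range_add_sum_Ico _ (by omega : m + 1 ≤ n + 1)]
  ring

theorem Real.isEquivalent_mul_div_log_mul {k : ℝ} (hk : 0 < k) :
    (fun y => k * y / Real.log (k * y)) ~[atTop] fun y => k * (y / Real.log y) := by
  have hlog : (fun y => Real.log (k * y)) ~[atTop] Real.log := by
    refine (IsEquivalent.refl.const_add_of_norm_tendsto_atTop (c := Real.log k)
      (tendsto_abs_atTop_atTop.comp Real.tendsto_log_atTop)).congr_left ?_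
    filter_upwards [eventually_gt_atTop 0] with y hy
    rw [Real.log_mul hk.ne' hy.ne']
  simpa only [Pi.div_def, mul_div_assoc] using (IsEquivalent.refl (u := fun y => k * y)).div hlog

section

variable {α : Type*} {l : Filter α}

theorem Asymptotics.IsEquivalent.sub_of_const_mul {u v w : α → ℝ} {a b : ℝ}
    (hu : u ~[l] fun x => a * w x) (hv : v ~[l] fun x => b * w x) (hab : a ≠ b) :
    (u - v) ~[l] fun x => (a - b) * w x := by
  have hu' := hu.isLittleO.trans_isBigO (isBigO_const_mul_self a w l)
  have hv' := hv.isLittleO.trans_isBigO (isBigO_const_mul_self b w l)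
  refine ((hu'.sub hv').trans_isBigO
    (isBigO_self_const_mul (sub_ne_zero.2 hab) w l)).congr_left fun x => ?_
  simp only [Pi.sub_apply]
  ring

theorem Asymptotics.IsEquivalent.eventually_const_mul_le {u v : α → ℝ} (h : u ~[l] v)
    (hv : ∀ᶠ x in l, 0 ≤ v x) {c : ℝ} (hc : c < 1) :
    ∀ᶠ x in l, c * v x ≤ u x := by
  filter_upwards [h.isLittleO.def (sub_pos.2 hc), hv] with x hx hvx
  rw [Real.norm_eq_abs, Real.norm_of_nonneg hvx, Pi.sub_apply] at hx
  linarith [(abs_le.mp hx).1]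

theorem Asymptotics.IsEquivalent.eventually_le_const_mul {u v : α → ℝ} (h : u ~[l] v)
    (hv : ∀ᶠ x in l, 0 ≤ v x) {c : ℝ} (hc : 1 < c) :
    ∀ᶠ x in l, u x ≤ c * v x := by
  filter_upwards [h.isLittleO.def (sub_pos.2 hc), hv] with x hx hvx
  rw [Real.norm_eq_abs, Real.norm_of_nonneg hvx, Pi.sub_apply] at hx
  linarith [(abs_le.mp hx).2]

end

theorem isEquivalent_sum_filter_Ioc_two_mul (P : ℕ → Prop) [DecidablePred P] {f : ℕ → ℝ}
    {c : ℝ} (hc : c ≠ 0)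
    (h : (fun x => ∑ p ∈ (range (x + 1)).filter P, f p)
      ~[atTop] fun x : ℕ => c * ((x : ℝ) / Real.log x)) :
    (fun x => ∑ p ∈ (Ioc x (2 * x)).filter P, f p)
      ~[atTop] fun x : ℕ => c * ((x : ℝ) / Real.log x) := by
  have hdouble : Tendsto (fun x : ℕ => 2 * x) atTop atTop := tendsto_id.const_mul_atTop' two_pos
  have hL : (fun x : ℕ => ((2 * x : ℕ) : ℝ) / Real.log (2 * x : ℕ))
      ~[atTop] fun x : ℕ => 2 * ((x : ℝ) / Real.log x) := by
    push_cast
    exact (Real.isEquivalent_mul_div_log_mul two_pos).comp_tendsto tendsto_natCast_atTop_atTop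
  have h2 : (fun x => ∑ p ∈ (range (2 * x + 1)).filter P, f p)
      ~[atTop] fun x : ℕ => 2 * c * ((x : ℝ) / Real.log x) := by
    simpa only [Function.comp_def, Pi.mul_def, mul_left_comm c, mul_assoc] using
      (h.comp_tendsto hdouble).trans ((IsEquivalent.refl (u := fun _ => c)).mul hL)
  refine ((h2.sub_of_const_mul h (by contrapose! hc; linarith)).congr_left ?_).congr_right ?_
  · exact Eventually.of_forall fun x => (sum_filter_Ioc_eq_sub P f (by omega)).symm
  · exact Eventually.of_forall fun x => by ring

theorem eventually_le_sum_filter_range_of_Ioc (P : ℕ → Prop) [DecidablePred P] {f : ℕ → ℝ}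
    (hf : ∀ p, 0 ≤ f p) {c : ℝ} (hc : 0 ≤ c)
    (h : ∀ᶠ x : ℕ in atTop, c * x / Real.log x ≤ ∑ p ∈ (Ioc x (2 * x)).filter P, f p) :
    ∀ᶠ x : ℕ in atTop, c / 3 * x / Real.log x ≤ ∑ p ∈ (range (x + 1)).filter P, f p := by
  have hhalf : Tendsto (fun x : ℕ => x / 2) atTop atTop :=
    Nat.tendsto_div_const_atTop two_ne_zero
  filter_upwards [hhalf.eventually h, eventually_ge_atTop 4] with x hx hx4
  set y := x / 2
  have hsum : ∑ p ∈ (Ioc y (2 * y)).filter P, f p ≤ ∑ p ∈ (range (x + 1)).filter P, f p :=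
    sum_le_sum_of_subset_of_nonneg (filter_subset_filter P fun n hn => by
      simp only [mem_Ioc, mem_range] at hn ⊢; omega) fun p _ _ => hf p
  have hlogy : 0 < Real.log y := Real.log_pos (by exact_mod_cast (by omega : 1 < y))
  have hlog : Real.log y ≤ Real.log x :=
    Real.log_le_log (by exact_mod_cast (by omega : 0 < y))
      (by exact_mod_cast Nat.div_le_self x 2)
  have hxy : (x : ℝ) ≤ 3 * y := by exact_mod_cast (by omega : x ≤ 3 * y)
  calc c / 3 * x / Real.log x ≤ c * y / Real.log y :=
        div_le_div₀ (by positivity) (by nlinarith) hlogy hlog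
    _ ≤ _ := hx.trans hsum

theorem le_of_pow_three_le_sq_mul {A B D L : ℝ} (hA : 0 ≤ A) (hL : 0 ≤ L) (hB : 3 / 4 * L ≤ B)
    (hD : D ≤ 3 * L) (h : B ^ 3 ≤ A ^ 2 * D) : 3 / 8 * L ≤ A := by
  rcases hL.eq_or_lt with rfl | hL
  · simpa using hA
  have hcube : (3 / 4 * L) ^ 3 ≤ A ^ 2 * (3 * L) :=
    (pow_le_pow_left₀ (by positivity) hB 3).trans (h.trans (by gcongr))
  -- `(3 / 8) ^ 2 * 3 = (3 / 4) ^ 3`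
  have hsq : (3 / 8 * L) ^ 2 ≤ A ^ 2 :=
    le_of_mul_le_mul_right (by linarith) (by positivity : 0 < 3 * L)
  exact (pow_le_pow_iff_left₀ (by positivity) hA two_ne_zero).1 hsq

/-- If `∑_{p ≤ x} a(p)² ∼ x/log x` and `∑_{p ≤ x} a(p)⁴ ∼ 2x/log x`,
then `∑_{x < p ≤ 2x} |a(p)| ≫ x/log x`, and in particular `∑_{p ≤ x} |a(p)| ≫ x/log x`. -/
theorem abs_first_moment_lower_bound (a : ℕ → ℝ)
    (h2 : (fun x : ℕ => ∑ p ∈ (Finset.range (x + 1)).filter Nat.Prime, (a p) ^ 2)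
        ~[atTop] fun x : ℕ => (x : ℝ) / Real.log x)
    (h4 : (fun x : ℕ => ∑ p ∈ (Finset.range (x + 1)).filter Nat.Prime, (a p) ^ 4)
        ~[atTop] fun x : ℕ => 2 * (x : ℝ) / Real.log x) :
    (∃ c > 0, ∀ᶠ x : ℕ in atTop,
        c * x / Real.log x ≤ ∑ p ∈ (Finset.Ioc x (2 * x)).filter Nat.Prime, |a p|) ∧
    (∃ c > 0, ∀ᶠ x : ℕ in atTop,
        c * x / Real.log x ≤ ∑ p ∈ (Finset.range (x + 1)).filter Nat.Prime, |a p|) := by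
  have hL (x : ℕ) : 0 ≤ (x : ℝ) / Real.log x :=
    div_nonneg (Nat.cast_nonneg x) (Real.log_natCast_nonneg x)
  have hD2 := isEquivalent_sum_filter_Ioc_two_mul Nat.Prime one_ne_zero
    (by simpa only [one_mul] using h2)
  have hD4 := isEquivalent_sum_filter_Ioc_two_mul Nat.Prime two_ne_zero
    (by simpa only [mul_div_assoc] using h4)
  have hdyadic : ∀ᶠ x : ℕ in atTop,
      3 / 8 * x / Real.log x ≤ ∑ p ∈ (Ioc x (2 * x)).filter Nat.Prime, |a p| := by
    filter_upwards [hD2.eventually_const_mul_le (.of_forall fun x => by simpa using hL x)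
        (by norm_num : (3 / 4 : ℝ) < 1),
      hD4.eventually_le_const_mul (.of_forall fun x => by simpa using hL x)
        (by norm_num : (1 : ℝ) < 3 / 2)] with x hB hD
    rw [mul_div_assoc]
    exact le_of_pow_three_le_sq_mul (sum_nonneg fun p _ => abs_nonneg (a p)) (hL x)
      (by linarith) (by linarith) (sum_sq_pow_three_le _ a)
  exact ⟨⟨3 / 8, by norm_num, hdyadic⟩, ⟨3 / 8 / 3, by norm_num,
    eventually_le_sum_filter_range_of_Ioc Nat.Prime (fun p => abs_nonneg (a p)) (by norm_num)
      hdyadic⟩⟩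
end

section
/- Suppose a : primes → ℝ satisfies ∑_{p ≤ x} a(p) = o(x/log x), ∑_{p ≤ x} a(p)² ∼ x/log x, and ∑_{p ≤ x} a(p)⁴ ∼ 2x/log x. Then for every sufficiently large x, the interval (x, 2x] contains a prime p with a(p) < 0 and a prime q with a(q) > 0. In particular the sequence a(p) changes sign infinitely often. -/
open Finset Filter Asymptotics

/-!
Write `L x = x / log x`. Since `L (2x) = 2 L x + o(L x)`, the hypotheses say that over the
primes of `(x, 2x]` the sums of `a`, `a²`, `a⁴` are `o(L x)`, `∼ L x` and `∼ 2 L x`. If `a` had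
a constant sign there, Hölder's inequality `(∑ a²)³ ≤ (∑ a)² ∑ a⁴` would give
`L x ³ ≲ o(L x)² · 2 L x`.
-/

lemma sum_sq_pow_three_le_sq_sum_mul_sum_pow_four {ι : Type*} (s : Finset ι) {b : ι → ℝ}
    (hb : ∀ i ∈ s, 0 ≤ b i) :
    (∑ i ∈ s, b i ^ 2) ^ 3 ≤ (∑ i ∈ s, b i) ^ 2 * ∑ i ∈ s, b i ^ 4 := by
  set S₁ := ∑ i ∈ s, b i
  set S₂ := ∑ i ∈ s, b i ^ 2
  set S₃ := ∑ i ∈ s, b i ^ 3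
  set S₄ := ∑ i ∈ s, b i ^ 4
  -- Cauchy–Schwarz twice: the moments `S k = ∑ b ^ k` are log-convex in `k`.
  have h₁₃ : S₂ ^ 2 ≤ S₁ * S₃ := sum_sq_le_sum_mul_sum_of_sq_le_mul s hb
    (fun i hi => pow_nonneg (hb i hi) 3) fun i _ => le_of_eq (by ring)
  have h₂₄ : S₃ ^ 2 ≤ S₂ * S₄ := sum_sq_le_sum_mul_sum_of_sq_le_mul s
    (fun i _ => sq_nonneg (b i)) (fun i hi => pow_nonneg (hb i hi) 4) fun i _ => le_of_eq (by ring)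
  have hS₂ : 0 ≤ S₂ := sum_nonneg fun i _ => sq_nonneg (b i)
  have h₄ : S₂ * S₂ ^ 3 ≤ S₂ * (S₁ ^ 2 * S₄) :=
    calc S₂ * S₂ ^ 3 = (S₂ ^ 2) ^ 2 := by ring
      _ ≤ (S₁ * S₃) ^ 2 := pow_le_pow_left₀ (sq_nonneg _) h₁₃ 2
      _ = S₁ ^ 2 * S₃ ^ 2 := by ring
      _ ≤ S₁ ^ 2 * (S₂ * S₄) := mul_le_mul_of_nonneg_left h₂₄ (sq_nonneg _)
      _ = S₂ * (S₁ ^ 2 * S₄) := by ring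
  rcases hS₂.eq_or_lt with h₀ | hpos
  · rw [← h₀, zero_pow three_ne_zero]
    exact mul_nonneg (sq_nonneg _) (sum_nonneg fun i hi => pow_nonneg (hb i hi) 4)
  · exact le_of_mul_le_mul_left h₄ hpos

section SignChange

variable {ι : Type*} {s : Finset ι} {b : ι → ℝ}

lemma exists_neg_of_sq_sum_mul_lt
    (h : (∑ i ∈ s, b i) ^ 2 * ∑ i ∈ s, b i ^ 4 < (∑ i ∈ s, b i ^ 2) ^ 3) :
    ∃ i ∈ s, b i < 0 := by
  by_contra! hb
  exact h.not_ge (sum_sq_pow_three_le_sq_sum_mul_sum_pow_four s hb)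

lemma exists_pos_of_sq_sum_mul_lt
    (h : (∑ i ∈ s, b i) ^ 2 * ∑ i ∈ s, b i ^ 4 < (∑ i ∈ s, b i ^ 2) ^ 3) :
    ∃ i ∈ s, 0 < b i := by
  obtain ⟨i, hi, hneg⟩ := exists_neg_of_sq_sum_mul_lt (b := fun i => -b i) (by
    simpa only [sum_neg_distrib, neg_sq, Even.neg_pow (by decide : Even 4)] using h)
  exact ⟨i, hi, neg_neg_iff_pos.1 hneg⟩

end SignChange

lemma eventually_sq_mul_lt_pow_three {α : Type*} {l : Filter α} {L D₁ D₂ D₄ : α → ℝ}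
    (hL : ∀ᶠ x in l, 0 < L x) (h₁ : D₁ =o[l] L) (h₂ : D₂ ~[l] L) (h₄ : D₄ =O[l] L) :
    ∀ᶠ x in l, D₁ x ^ 2 * D₄ x < D₂ x ^ 3 := by
  have hsmall : (fun x => D₁ x ^ 2 * D₄ x) =o[l] (L ^ 3) :=
    ((h₁.pow two_pos).mul_isBigO h₄).congr_right fun x => by simp only [Pi.pow_apply]; ring
  have hpos := ((h₂.pow 3).sub_isLittleO hsmall).eventually_pos (hL.mono fun x hx => pow_pos hx 3)
  filter_upwards [hpos] with x hx
  simpa only [Pi.sub_apply, Pi.pow_apply, sub_pos] using hx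

lemma sum_filter_range_succ_sub_sum_filter_range_succ {M : Type*} [AddCommGroup M]
    (P : ℕ → Prop) [DecidablePred P] (f : ℕ → M) {m n : ℕ} (h : m ≤ n) :
    ∑ p ∈ (range (n + 1)).filter P, f p - ∑ p ∈ (range (m + 1)).filter P, f p
      = ∑ p ∈ (Ioc m n).filter P, f p := by
  rw [sub_eq_iff_eq_add', Nat.range_succ_eq_Iic, Nat.range_succ_eq_Iic, ← Iic_union_Ioc_eq_Iic h,
    filter_union, sum_union (disjoint_filter_filter (Iic_disjoint_Ioc le_rfl))]

lemma isLittleO_comp_mul_sub_sub {F L : ℕ → ℝ} {k : ℕ} (hk : 0 < k) {c : ℝ}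
    (hL : (fun x => L (k * x) - k * L x) =o[atTop] L)
    (hF : (fun x => F x - c * L x) =o[atTop] L) :
    (fun x => F (k * x) - F x - (k - 1) * c * L x) =o[atTop] L := by
  have hLk : (fun x => L (k * x)) =O[atTop] L :=
    (hL.isBigO.add ((isBigO_refl L atTop).const_mul_left k)).congr_left fun x => by ring
  have hk_tendsto : Tendsto (fun x : ℕ => k * x) atTop atTop :=
    tendsto_id.const_mul_atTop' hk
  have hFk : (fun x => F (k * x) - c * L (k * x)) =o[atTop] L :=
    (hF.comp_tendsto hk_tendsto).trans_isBigO hLk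
  exact ((hFk.sub hF).add (hL.const_mul_left c)).congr_left fun x => by ring

lemma isLittleO_div_log_mul_sub {k : ℕ} (hk : 0 < k) :
    (fun x : ℕ => ((k * x : ℕ) : ℝ) / Real.log (k * x : ℕ) - k * ((x : ℝ) / Real.log x))
      =o[atTop] fun x : ℕ => (x : ℝ) / Real.log x := by
  set L : ℕ → ℝ := fun x => (x : ℝ) / Real.log x
  have hlog : Tendsto (fun x : ℕ => Real.log (k * x : ℕ)) atTop atTop :=
    Real.tendsto_log_atTop.comp
      (tendsto_natCast_atTop_atTop.comp (tendsto_id.const_mul_atTop' hk))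
  have hsmall : (fun x => L x * (Real.log (k * x : ℕ))⁻¹) =o[atTop] L :=
    ((isBigO_refl L atTop).mul_isLittleO
      ((isLittleO_one_iff ℝ).2 hlog.inv_tendsto_atTop)).congr_right fun x => mul_one _
  -- `k x / log (k x) - k x / log x = -(k log k) · L x / log (k x)`
  refine (hsmall.const_mul_left (-(k * Real.log k))).congr' ?_ EventuallyEq.rfl
  filter_upwards [eventually_gt_atTop 1] with x hx
  have hx' : (1 : ℝ) < x := by exact_mod_cast hx
  have hk' : (1 : ℝ) ≤ k := by exact_mod_cast hk
  have hlogx : 0 < Real.log x := Real.log_pos hx'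
  have hlogkx : Real.log (k * x : ℕ) = Real.log k + Real.log x := by
    push_cast
    exact Real.log_mul (by positivity) (by positivity)
  have : 0 < Real.log k + Real.log x := by linarith [Real.log_nonneg hk']
  simp only [L, hlogkx]
  push_cast
  field_simp
  ring

lemma eventually_div_log_pos : ∀ᶠ x : ℕ in atTop, 0 < (x : ℝ) / Real.log x := by
  filter_upwards [eventually_gt_atTop 1] with x hx
  have hx' : (1 : ℝ) < x := by exact_mod_cast hx
  exact div_pos (by linarith) (Real.log_pos hx')

lemma infinite_setOf_of_eventually_exists_gt {P : ℕ → Prop}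
    (h : ∀ᶠ x in atTop, ∃ p > x, P p) :
    {p | P p}.Infinite :=
  Set.infinite_of_forall_exists_gt fun a => by
    obtain ⟨x, ⟨p, hpx, hp⟩, hax⟩ := (h.and (eventually_ge_atTop a)).exists
    exact ⟨p, hp, by omega⟩

lemma isLittleO_sum_filter_Ioc_two_mul_sub (P : ℕ → Prop) [DecidablePred P]
    (f : ℕ → ℝ) (c : ℝ)
    (hf : (fun x : ℕ => ∑ p ∈ (range (x + 1)).filter P, f p - c * ((x : ℝ) / Real.log x))
      =o[atTop] fun x : ℕ => (x : ℝ) / Real.log x) :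
    (fun x : ℕ => ∑ p ∈ (Ioc x (2 * x)).filter P, f p - c * ((x : ℝ) / Real.log x))
      =o[atTop] fun x : ℕ => (x : ℝ) / Real.log x :=
  (isLittleO_comp_mul_sub_sub two_pos (isLittleO_div_log_mul_sub two_pos) hf).congr_left fun x => by
    rw [sum_filter_range_succ_sub_sum_filter_range_succ _ _ (by omega)]
    norm_num

/-- If `∑_{p ≤ x} a(p) = o(x/log x)`, `∑_{p ≤ x} a(p)² ∼ x/log x` and
`∑_{p ≤ x} a(p)⁴ ∼ 2x/log x`, then for every sufficiently large `x` the interval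
`(x, 2x]` contains a prime `p` with `a(p) < 0` and a prime `q` with `a(q) > 0`;
in particular `a(p)` changes sign infinitely often. -/
theorem sign_changes_in_dyadic_intervals (a : ℕ → ℝ)
    (h1 : (fun x : ℕ => ∑ p ∈ (Finset.range (x + 1)).filter Nat.Prime, a p)
        =o[atTop] fun x : ℕ => (x : ℝ) / Real.log x)
    (h2 : (fun x : ℕ => ∑ p ∈ (Finset.range (x + 1)).filter Nat.Prime, (a p) ^ 2)
        ~[atTop] fun x : ℕ => (x : ℝ) / Real.log x)
    (h4 : (fun x : ℕ => ∑ p ∈ (Finset.range (x + 1)).filter Nat.Prime, (a p) ^ 4)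
        ~[atTop] fun x : ℕ => 2 * (x : ℝ) / Real.log x) :
    (∀ᶠ x : ℕ in atTop,
        (∃ p ∈ Finset.Ioc x (2 * x), p.Prime ∧ a p < 0) ∧
        (∃ q ∈ Finset.Ioc x (2 * x), q.Prime ∧ 0 < a q)) ∧
    {p : ℕ | p.Prime ∧ a p < 0}.Infinite ∧
    {p : ℕ | p.Prime ∧ 0 < a p}.Infinite := by
  set L : ℕ → ℝ := fun x => (x : ℝ) / Real.log x
  have dyadic := isLittleO_sum_filter_Ioc_two_mul_sub Nat.Prime
  have hD₁ : (fun x => ∑ p ∈ (Ioc x (2 * x)).filter Nat.Prime, a p) =o[atTop] L :=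
    (dyadic a 0 (h1.congr_left fun x => by simp)).congr_left fun x => by simp
  have hD₂ : (fun x => ∑ p ∈ (Ioc x (2 * x)).filter Nat.Prime, a p ^ 2) ~[atTop] L :=
    (dyadic (a · ^ 2) 1 (h2.isLittleO.congr_left fun x => by simp [L])).congr_left
      fun x => by simp [L]
  have hD₄ : (fun x => ∑ p ∈ (Ioc x (2 * x)).filter Nat.Prime, a p ^ 4) =O[atTop] L := by
    have h4' : (fun x => ∑ p ∈ (range (x + 1)).filter Nat.Prime, a p ^ 4 - 2 * L x)
        =o[atTop] fun x => 2 * L x :=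
      h4.isLittleO.congr (fun x => by simp [L, mul_div_assoc]) fun x => mul_div_assoc ..
    exact ((dyadic (a · ^ 4) 2 h4'.of_const_mul_right).isBigO.add
      ((isBigO_refl L atTop).const_mul_left 2)).congr_left fun x => by ring
  have key := eventually_sq_mul_lt_pow_three eventually_div_log_pos hD₁ hD₂ hD₄
  have signs : ∀ᶠ x : ℕ in atTop,
      (∃ p ∈ Ioc x (2 * x), p.Prime ∧ a p < 0) ∧
        (∃ q ∈ Ioc x (2 * x), q.Prime ∧ 0 < a q) :=
    key.mono fun x hx => by
      simpa only [mem_filter, and_assoc] using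
        And.intro (exists_neg_of_sq_sum_mul_lt hx) (exists_pos_of_sq_sum_mul_lt hx)
  refine ⟨signs, ?_, ?_⟩ <;> refine infinite_setOf_of_eventually_exists_gt (signs.mono ?_)
  · exact fun x ⟨⟨p, hp, hP⟩, _⟩ => ⟨p, (mem_Ioc.1 hp).1, hP⟩
  · exact fun x ⟨_, ⟨q, hq, hQ⟩⟩ => ⟨q, (mem_Ioc.1 hq).1, hQ⟩
end

section
/- Taking a = 4 in the previous statement: if ∑_{p ≤ x} a(p)² ∼ π(x), then the set of primes p with |a(p)| < 2 has lower natural density at least 3/4. -/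
/-!
Chebyshev's inequality on the finite set of primes `p ≤ x`: the primes with `|a p| ≥ 2` contribute
at least `4` each to `∑_{p ≤ x} a(p)²`, which is `(1 + o(1)) π(x)`, so there are at most
`(1/4 + o(1)) π(x)` of them.
-/

open Finset Filter Asymptotics Topology

theorem Filter.Tendsto.le_liminf_of_eventually_le {α β : Type*}
    [ConditionallyCompleteLinearOrder β] [TopologicalSpace β] [OrderTopology β]
    {l : Filter α} [l.NeBot] {u v : α → β} {b : β}
    (hv : Tendsto v l (𝓝 b)) (hvu : v ≤ᶠ[l] u) (hu : IsBoundedUnder (· ≤ ·) l u) :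
    b ≤ liminf u l :=
  hv.liminf_eq ▸ liminf_le_liminf hvu hv.isBoundedUnder_ge hu.isCoboundedUnder_ge

section Chebyshev

variable {ι : Type*} (s : Finset ι) (f : ι → ℝ) {c : ℝ}

theorem sq_mul_card_filter_le_abs_le_sum_sq (hc : 0 ≤ c) :
    c ^ 2 * #(s.filter fun i => c ≤ |f i|) ≤ ∑ i ∈ s, f i ^ 2 := by
  rw [mul_comm, ← nsmul_eq_mul]
  calc #(s.filter fun i => c ≤ |f i|) • c ^ 2
      ≤ ∑ i ∈ s.filter (fun i => c ≤ |f i|), f i ^ 2 :=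
        card_nsmul_le_sum _ _ _ fun i hi => by
          simpa only [sq_abs] using pow_le_pow_left₀ hc (mem_filter.1 hi).2 2
    _ ≤ ∑ i ∈ s, f i ^ 2 :=
        sum_le_sum_of_subset_of_nonneg (filter_subset _ _) fun i _ _ => sq_nonneg (f i)

theorem card_sub_sum_sq_div_le_card_filter_abs_lt (hc : 0 < c) :
    (#s : ℝ) - (∑ i ∈ s, f i ^ 2) / c ^ 2 ≤ #(s.filter fun i => |f i| < c) := by
  have hsplit := s.card_filter_add_card_filter_not fun i => |f i| < c
  simp only [not_lt] at hsplit
  have hlarge := sq_mul_card_filter_le_abs_le_sum_sq s f hc.le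
  rw [sub_le_iff_le_add, ← sub_le_iff_le_add', le_div_iff₀ (by positivity), ← hsplit]
  push_cast
  linarith

end Chebyshev

theorem le_liminf_card_filter_abs_lt_div_card {ι α : Type*} {l : Filter α} [l.NeBot]
    (s : α → Finset ι) (f : ι → ℝ) {c : ℝ} (hc : 0 < c) (hs : ∀ᶠ x in l, (s x).Nonempty)
    (hf : (fun x => ∑ i ∈ s x, f i ^ 2) ~[l] fun x => (#(s x) : ℝ)) :
    1 - 1 / c ^ 2 ≤ liminf (fun x => (#((s x).filter fun i => |f i| < c) : ℝ) / #(s x)) l := by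
  have hcard : ∀ᶠ x in l, (0 : ℝ) < #(s x) := hs.mono fun x hx => by exact_mod_cast hx.card_pos
  have hmean : Tendsto (fun x => (∑ i ∈ s x, f i ^ 2) / #(s x)) l (𝓝 1) :=
    (isEquivalent_iff_tendsto_one (hcard.mono fun _ h => h.ne')).1 hf
  refine Tendsto.le_liminf_of_eventually_le (v := fun x => 1 - (∑ i ∈ s x, f i ^ 2) / #(s x) / c ^ 2)
    (by simpa using tendsto_const_nhds.sub (hmean.div_const (c ^ 2))) ?_ ?_
  · filter_upwards [hcard] with x hx
    rw [le_div_iff₀ hx]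
    calc (1 - (∑ i ∈ s x, f i ^ 2) / #(s x) / c ^ 2) * #(s x)
        = #(s x) - (∑ i ∈ s x, f i ^ 2) / c ^ 2 := by field_simp
      _ ≤ _ := card_sub_sum_sq_div_le_card_filter_abs_lt (s x) f hc
  · exact isBoundedUnder_of_eventually_le (a := 1) <| hcard.mono fun x hx =>
      div_le_one_of_le₀ (by exact_mod_cast card_le_card (filter_subset _ _)) hx.le

/-- If `∑_{p ≤ x} a(p)² ∼ π(x)` then the set of primes `p` with
`|a(p)| < 2` has lower natural density at least `3/4`. -/
theorem ramanujan_density_three_quarters (a : ℕ → ℝ)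
    (h2 : (fun x : ℕ => ∑ p ∈ (Finset.range (x + 1)).filter Nat.Prime, (a p) ^ 2)
        ~[atTop] fun x : ℕ => (((Finset.range (x + 1)).filter Nat.Prime).card : ℝ)) :
    (3 : ℝ) / 4 ≤
      atTop.liminf (fun x : ℕ =>
        (((Finset.range (x + 1)).filter (fun p => p.Prime ∧ |a p| < 2)).card : ℝ) /
          (((Finset.range (x + 1)).filter Nat.Prime).card : ℝ)) := by
  have hprimes : ∀ᶠ x : ℕ in atTop, ((range (x + 1)).filter Nat.Prime).Nonempty :=
    (eventually_ge_atTop 2).mono fun x hx =>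
      ⟨2, mem_filter.2 ⟨mem_range.2 (by omega), Nat.prime_two⟩⟩
  have hdensity := le_liminf_card_filter_abs_lt_div_card _ a two_pos hprimes h2
  simp only [filter_filter] at hdensity
  norm_num at hdensity
  exact hdensity
end

section
/- Suppose a : primes → ℝ satisfies |a(p)| ≤ 2 for all p, ∑_{p ≤ x} a(p)⁴ ∼ 2π(x), and ∑_{p ≤ x} a(p)⁶ ∼ 5π(x). Then liminf_{x→∞} #{p ≤ x : a(p)² > 2}/π(x) ≥ 1/32. -/
open Finset Filter Asymptotics Topology

/-! On primes with `a(p)² ≤ 2` the summand `a(p)⁶ - 2a(p)⁴ = a(p)⁴(a(p)² - 2)` is nonpositive, and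
on the others it is at most `4² · 2 = 32` since `a(p)² ≤ 4`. Hence
`∑_{p ≤ x} (a(p)⁶ - 2a(p)⁴) ≤ 32 · #{p ≤ x : a(p)² > 2}`, while the hypotheses make the left side
`(5 - 2 · 2 + o(1)) π(x) = (1 + o(1)) π(x)`. -/

lemma pow_six_sub_two_mul_pow_four_nonpos {t : ℝ} (ht : t ^ 2 ≤ 2) : t ^ 6 - 2 * t ^ 4 ≤ 0 := by
  nlinarith [sq_nonneg (t ^ 2)]

lemma pow_six_sub_two_mul_pow_four_le_of_abs_le_two {t : ℝ} (ht : |t| ≤ 2) :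
    t ^ 6 - 2 * t ^ 4 ≤ 32 := by
  have ht2 : t ^ 2 ≤ 4 := by nlinarith [abs_nonneg t, sq_abs t]
  nlinarith [sq_nonneg (t ^ 2), sq_nonneg (t ^ 2 - 2)]

lemma sum_pow_six_sub_two_mul_pow_four_le {ι : Type*} (s : Finset ι) (f : ι → ℝ)
    (hf : ∀ i ∈ s, |f i| ≤ 2) :
    ∑ i ∈ s, (f i ^ 6 - 2 * f i ^ 4) ≤ 32 * (#{i ∈ s | 2 < f i ^ 2} : ℝ) := by
  rw [← sum_filter_add_sum_filter_not s (fun i => 2 < f i ^ 2)]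
  calc _ ≤ #{i ∈ s | 2 < f i ^ 2} • (32 : ℝ) + 0 := by
        gcongr
        · exact sum_le_card_nsmul _ _ _ fun i hi =>
            pow_six_sub_two_mul_pow_four_le_of_abs_le_two (hf i (mem_filter.1 hi).1)
        · exact sum_nonpos fun i hi =>
            pow_six_sub_two_mul_pow_four_nonpos (not_lt.1 (mem_filter.1 hi).2)
    _ = 32 * (#{i ∈ s | 2 < f i ^ 2} : ℝ) := by rw [nsmul_eq_mul, add_zero, mul_comm]

lemma Asymptotics.IsEquivalent.tendsto_div_of_const_mul {α : Type*} {l : Filter α}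
    {u v : α → ℝ} {c : ℝ} (h : u ~[l] fun x => c * v x) (hv : ∀ᶠ x in l, v x ≠ 0) :
    Tendsto (fun x => u x / v x) l (𝓝 c) := by
  refine (h.div IsEquivalent.refl).symm.tendsto_nhds (tendsto_const_nhds.congr' ?_)
  filter_upwards [hv] with x hx
  simp [hx]

lemma le_liminf_of_tendsto_of_le {α : Type*} {l : Filter α} [l.NeBot] {f g : α → ℝ} {c : ℝ}
    (hg : Tendsto g l (𝓝 c)) (hle : ∀ᶠ x in l, g x ≤ f x) (hf : IsBoundedUnder (· ≤ ·) l f) :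
    c ≤ liminf f l :=
  hg.liminf_eq ▸ liminf_le_liminf hle hg.isBoundedUnder_ge hf.isCoboundedUnder_ge

lemma card_filter_prime_range_succ_ne_zero {x : ℕ} (hx : 2 ≤ x) :
    (#((range (x + 1)).filter Nat.Prime) : ℝ) ≠ 0 := by
  have h2 : 2 ∈ (range (x + 1)).filter Nat.Prime := mem_filter.2 ⟨mem_range.2 (by omega), Nat.prime_two⟩
  exact_mod_cast (card_pos.2 ⟨2, h2⟩).ne'

/-- If `|a(p)| ≤ 2` for all primes `p`, `∑_{p ≤ x} a(p)⁴ ∼ 2π(x)` and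
`∑_{p ≤ x} a(p)⁶ ∼ 5π(x)`, then `liminf #{p ≤ x : a(p)² > 2}/π(x) ≥ 1/32`. -/
theorem large_values_density_sqrt_two (a : ℕ → ℝ)
    (hbd : ∀ p : ℕ, p.Prime → |a p| ≤ 2)
    (h4 : (fun x : ℕ => ∑ p ∈ (Finset.range (x + 1)).filter Nat.Prime, (a p) ^ 4)
        ~[atTop] fun x : ℕ => 2 * (((Finset.range (x + 1)).filter Nat.Prime).card : ℝ))
    (h6 : (fun x : ℕ => ∑ p ∈ (Finset.range (x + 1)).filter Nat.Prime, (a p) ^ 6)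
        ~[atTop] fun x : ℕ => 5 * (((Finset.range (x + 1)).filter Nat.Prime).card : ℝ)) :
    (1 : ℝ) / 32 ≤
      atTop.liminf (fun x : ℕ =>
        (((Finset.range (x + 1)).filter (fun p => p.Prime ∧ 2 < (a p) ^ 2)).card : ℝ) /
          (((Finset.range (x + 1)).filter Nat.Prime).card : ℝ)) := by
  have hπ : ∀ᶠ x : ℕ in atTop, (#((range (x + 1)).filter Nat.Prime) : ℝ) ≠ 0 :=
    eventually_atTop.2 ⟨2, fun x hx => card_filter_prime_range_succ_ne_zero hx⟩
  have hlim := ((h6.tendsto_div_of_const_mul hπ).sub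
    ((h4.tendsto_div_of_const_mul hπ).const_mul 2)).div_const 32
  rw [show ((5 : ℝ) - 2 * 2) / 32 = 1 / 32 by norm_num] at hlim
  refine le_liminf_of_tendsto_of_le hlim
    (Eventually.of_forall fun x => ?_)
    (isBoundedUnder_of ⟨1, fun x => div_le_one_of_le₀ ?_ (Nat.cast_nonneg _)⟩)
  · have hsum := sum_pow_six_sub_two_mul_pow_four_le ((range (x + 1)).filter Nat.Prime) a
      fun p hp => hbd p (mem_filter.1 hp).2
    rw [filter_filter, sum_sub_distrib, ← mul_sum] at hsum
    rw [← mul_div_assoc, ← sub_div, div_right_comm]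
    gcongr
    rw [div_le_iff₀ (by norm_num)]
    linarith
  · rw [← filter_filter]
    exact_mod_cast card_le_card (filter_subset _ _)
end

section
/- Suppose a : primes → ℝ satisfies ∑_{p ≤ x} a(p)⁴ ∼ 2π(x) and ∑_{p ≤ x} a(p)⁶ ∼ 5π(x). Then for every sufficiently large x there exists a prime p ∈ (x, 2x] with a(p)² > 2. In particular there are infinitely many primes p with |a(p)| > √2. -/
/-!
With `V(t) = -t⁶ + 2t⁴ + 1`, the hypotheses give `∑_{p ≤ x} V(a p) = (4 - 5 + 1) π(x) + o(π(x))`,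
so the sum of `V(a p)` over the primes in `(x, 2x]` is `o(π(2x))`. If every such prime had
`a(p)² ≤ 2`, then `V(a p) = 1 + a(p)⁴ (2 - a(p)²) ≥ 1` and that sum would be at least the number
of primes in `(x, 2x]`. That number is `≫ x / log x ≫ π(2x)`: the lower bound is Erdős' argument
for Bertrand's postulate (the primes in `(x, 2x]` are the only prime factors of `C(2x, x) ≥ 4ˣ / x`
above `2x / 3`), the upper bound is Chebyshev's.
-/

open Finset Filter Asymptotics
open scoped Nat.Prime

theorem Real.isLittleO_sqrt_mul_log_id : (fun x ↦ √x * Real.log x) =o[atTop] id := by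
  have h := (isBigO_refl Real.sqrt atTop).mul_isLittleO
    (isLittleO_log_rpow_atTop (by norm_num : (0 : ℝ) < 1 / 2))
  refine h.congr' .rfl ?_
  filter_upwards [eventually_ge_atTop 0] with x hx
  rw [← Real.sqrt_eq_rpow, Real.mul_self_sqrt hx, id]

namespace Nat

theorem primesLE_union_filter_Ioc {m n : ℕ} (h : m ≤ n) :
    primesLE m ∪ {p ∈ Ioc m n | p.Prime} = primesLE n := by
  ext p
  simp only [mem_union, mem_primesLE, mem_filter, mem_Ioc]
  grind

theorem disjoint_primesLE_filter_Ioc (m n : ℕ) :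
    Disjoint (primesLE m) {p ∈ Ioc m n | p.Prime} :=
  disjoint_left.2 fun _ hp hp' ↦ by
    have := le_of_mem_primesLE hp
    simp only [mem_filter, mem_Ioc] at hp'
    omega

theorem sum_primesLE_add_sum_filter_Ioc {M : Type*} [AddCommMonoid M] (f : ℕ → M) {m n : ℕ}
    (h : m ≤ n) :
    ∑ p ∈ primesLE m, f p + ∑ p ∈ Ioc m n with p.Prime, f p =
      ∑ p ∈ primesLE n, f p := by
  rw [← sum_union (disjoint_primesLE_filter_Ioc m n), primesLE_union_filter_Ioc h]

theorem centralBinom_eq_prod_range_mul_prod_filter_Ioc {n : ℕ} (hn : 2 < n) :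
    centralBinom n = (∏ p ∈ range (2 * n / 3 + 1), p ^ (centralBinom n).factorization p) *
      ∏ p ∈ Ioc n (2 * n) with p.Prime, p ^ (centralBinom n).factorization p := by
  conv_lhs => rw [← prod_pow_factorization_centralBinom,
    ← prod_range_mul_prod_Ico _ (by omega : 2 * n / 3 + 1 ≤ 2 * n + 1)]
  congr 1
  refine (prod_subset (fun p hp ↦ ?_) (fun p hp hp' ↦ ?_)).symm
  · simp only [mem_filter, mem_Ioc, mem_Ico] at hp ⊢
    omega
  · simp only [mem_filter, mem_Ioc, mem_Ico, not_and'] at hp hp'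
    by_cases hprime : p.Prime
    · rw [factorization_centralBinom_of_two_mul_self_lt_three_mul hn (by grind) (by omega),
        pow_zero]
    · rw [factorization_eq_zero_of_not_prime _ hprime, pow_zero]

theorem prod_range_pow_factorization_centralBinom_le {n : ℕ} (hn : 0 < n) :
    ∏ p ∈ range (2 * n / 3 + 1), p ^ (centralBinom n).factorization p ≤
      (2 * n) ^ sqrt (2 * n) * 4 ^ (2 * n / 3) := by
  set v := (centralBinom n).factorization
  -- `p ^ v p ≤ 2n` always, and `v p ≤ 1` as soon as `p² > 2n`.
  have hpow (p) : p ^ v p ≤ (if p.Prime ∧ p ≤ sqrt (2 * n) then 2 * n else 1) *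
      if p.Prime then p else 1 := by
    by_cases hp : p.Prime
    · by_cases hsmall : p ≤ sqrt (2 * n)
      · simp only [hp, hsmall, and_self, if_true]
        exact (pow_factorization_choose_le (by omega)).trans (Nat.le_mul_of_pos_right _ hp.pos)
      · have : v p ≤ 1 := factorization_choose_le_one (sqrt_lt'.1 (not_le.1 hsmall))
        simpa [hp, hsmall] using (pow_le_pow_right₀ hp.one_le this).trans_eq (pow_one p)
    · simp [v, hp, factorization_eq_zero_of_not_prime _ hp]
  grw [prod_le_prod' fun p _ ↦ hpow p, prod_mul_distrib, ← prod_filter, ← prod_filter,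
    prod_const, ← primorial, primorial_le_four_pow]
  gcongr
  · omega
  · calc #{p ∈ range (2 * n / 3 + 1) | p.Prime ∧ p ≤ sqrt (2 * n)}
        ≤ #(Ioc 0 (sqrt (2 * n))) := card_le_card fun p hp ↦ by
          simp only [mem_filter, mem_Ioc] at hp ⊢
          exact ⟨hp.2.1.pos, hp.2.2⟩
      _ = sqrt (2 * n) := by simp

theorem prod_filter_Ioc_pow_factorization_centralBinom_le (n : ℕ) :
    ∏ p ∈ Ioc n (2 * n) with p.Prime, p ^ (centralBinom n).factorization p ≤
      (2 * n) ^ #{p ∈ Ioc n (2 * n) | p.Prime} :=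
  prod_le_pow_card _ _ _ fun _ hp ↦ pow_factorization_choose_le (by grind)

theorem centralBinom_le_mul_pow_card_filter_Ioc {n : ℕ} (hn : 2 < n) :
    centralBinom n ≤
      (2 * n) ^ sqrt (2 * n) * 4 ^ (2 * n / 3) * (2 * n) ^ #{p ∈ Ioc n (2 * n) | p.Prime} := by
  rw [centralBinom_eq_prod_range_mul_prod_filter_Ioc hn]
  exact Nat.mul_le_mul (prod_range_pow_factorization_centralBinom_le (by omega))
    (prod_filter_Ioc_pow_factorization_centralBinom_le n)

theorem mul_log_four_le_add_card_filter_Ioc_mul_log {n : ℕ} (hn : 4 ≤ n) :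
    n * Real.log 4 ≤ Real.log n + √(2 * n) * Real.log (2 * n) + 2 * n / 3 * Real.log 4 +
      #{p ∈ Ioc n (2 * n) | p.Prime} * Real.log (2 * n) := by
  set k := #{p ∈ Ioc n (2 * n) | p.Prime}
  have hnat : 4 ^ n ≤ n * ((2 * n) ^ sqrt (2 * n) * 4 ^ (2 * n / 3) * (2 * n) ^ k) :=
    (four_pow_lt_mul_centralBinom n hn).le.trans
      (Nat.mul_le_mul_left n (centralBinom_le_mul_pow_card_filter_Ioc (by omega)))
  have h2n : (1 : ℝ) ≤ 2 * n := by norm_cast; omega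
  calc n * Real.log 4 = Real.log ((4 : ℕ) ^ n) := by push_cast; rw [Real.log_pow]
    _ ≤ Real.log
          (n * ((2 * n : ℕ) ^ sqrt (2 * n) * (4 : ℕ) ^ (2 * n / 3) * (2 * n : ℕ) ^ k)) :=
        Real.log_le_log (by positivity) (by exact_mod_cast hnat)
    _ = Real.log n + sqrt (2 * n) * Real.log (2 * n) + ((2 * n / 3 : ℕ) : ℝ) * Real.log 4 +
          k * Real.log (2 * n) := by
        push_cast
        rw [Real.log_mul (by positivity) (by positivity),
          Real.log_mul (by positivity) (by positivity),
          Real.log_mul (by positivity) (by positivity), Real.log_pow, Real.log_pow, Real.log_pow]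
        ring
    _ ≤ _ := by
        have hlog : 0 ≤ Real.log (2 * n) := Real.log_nonneg h2n
        gcongr
        · exact_mod_cast Real.nat_sqrt_le_real_sqrt
        · exact_mod_cast Nat.cast_div_le

theorem isLittleO_sqrt_two_mul_mul_log :
    (fun n : ℕ ↦ √(2 * n) * Real.log (2 * n)) =o[atTop] (fun n ↦ (n : ℝ)) :=
  (Real.isLittleO_sqrt_mul_log_id.comp_tendsto
    (tendsto_natCast_atTop_atTop.const_mul_atTop two_pos)).trans_isBigO
    (isBigO_const_mul_self 2 _ _)

theorem eventually_mul_log_four_div_six_le_card_filter_Ioc_mul_log :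
    ∀ᶠ n : ℕ in atTop,
      n * Real.log 4 / 6 ≤ #{p ∈ Ioc n (2 * n) | p.Prime} * Real.log (2 * n) := by
  have hlog4 : 0 < Real.log 4 := Real.log_pos (by norm_num)
  filter_upwards [eventually_ge_atTop 4,
    isLittleO_sqrt_two_mul_mul_log.bound (by positivity : 0 < Real.log 4 / 12)] with n hn hsmall
  have h2n : (1 : ℝ) ≤ 2 * n := by norm_cast; omega
  have hlog_le : Real.log n ≤ √(2 * n) * Real.log (2 * n) := by
    calc Real.log n ≤ Real.log (2 * n) := Real.log_le_log (by positivity) (by linarith)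
      _ ≤ √(2 * n) * Real.log (2 * n) :=
        le_mul_of_one_le_left (Real.log_nonneg h2n) (Real.one_le_sqrt.2 h2n)
  rw [Real.norm_natCast,
    Real.norm_of_nonneg (mul_nonneg (Real.sqrt_nonneg _) (Real.log_nonneg h2n))] at hsmall
  linarith [mul_log_four_le_add_card_filter_Ioc_mul_log hn]

theorem isBigO_div_log_two_mul_card_filter_Ioc :
    (fun n : ℕ ↦ n / Real.log (2 * n)) =O[atTop]
      (fun n ↦ (#{p ∈ Ioc n (2 * n) | p.Prime} : ℝ)) := by
  have hlog4 : 0 < Real.log 4 := Real.log_pos (by norm_num)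
  refine IsBigO.of_bound (6 / Real.log 4) ?_
  filter_upwards [eventually_mul_log_four_div_six_le_card_filter_Ioc_mul_log,
    eventually_ge_atTop 1] with n hn hn1
  have hlog : 0 < Real.log (2 * n) := Real.log_pos (by norm_cast; omega)
  rw [Real.norm_natCast, Real.norm_of_nonneg (by positivity), div_le_iff₀ hlog, mul_assoc,
    div_mul_eq_mul_div, le_div_iff₀ hlog4]
  linarith

theorem isBigO_primeCounting_two_mul_div_log :
    (fun n : ℕ ↦ (π (2 * n) : ℝ)) =O[atTop] (fun n ↦ n / Real.log (2 * n)) := by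
  refine IsBigO.of_bound (2 * (Real.log 4 + 1)) ?_
  filter_upwards [(tendsto_natCast_atTop_atTop.const_mul_atTop two_pos).eventually
    (Chebyshev.eventually_primeCounting_le one_pos), eventually_ge_atTop 1] with n hn hn1
  have : 0 ≤ Real.log (2 * n) := Real.log_nonneg (by norm_cast; omega)
  rw [Real.norm_natCast, Real.norm_of_nonneg (by positivity)]
  convert hn using 1
  · norm_cast
    rw [Nat.floor_natCast]
  · ring

theorem isBigO_primeCounting_two_mul_card_filter_Ioc :
    (fun n : ℕ ↦ (π (2 * n) : ℝ)) =O[atTop] (fun n ↦ (#{p ∈ Ioc n (2 * n) | p.Prime} : ℝ)) :=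
  isBigO_primeCounting_two_mul_div_log.trans isBigO_div_log_two_mul_card_filter_Ioc

end Nat

theorem eventually_exists_prime_mem_Ioc_lt {f : ℕ → ℝ} {c : ℝ} (hc : 0 < c)
    (hf : (fun x ↦ ∑ p ∈ Nat.primesLE x, f p) =o[atTop] (fun x ↦ (π x : ℝ))) :
    ∀ᶠ x in atTop, ∃ p ∈ Ioc x (2 * x), p.Prime ∧ f p < c := by
  have hmono : (fun x ↦ (π x : ℝ)) =O[atTop] (fun x ↦ (π (2 * x) : ℝ)) :=
    IsBigO.of_bound 1 (Eventually.of_forall fun x ↦ by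
      simpa using Nat.monotone_primeCounting (by omega : x ≤ 2 * x))
  have h2x : Tendsto (fun x : ℕ ↦ 2 * x) atTop atTop := tendsto_id.const_mul_atTop' two_pos
  have hinterval : (fun x ↦ ∑ p ∈ Ioc x (2 * x) with p.Prime, f p) =o[atTop]
      (fun x ↦ (#{p ∈ Ioc x (2 * x) | p.Prime} : ℝ)) := by
    refine (((hf.comp_tendsto h2x).sub (hf.trans_isBigO hmono)).congr_left fun x ↦ ?_).trans_isBigO
      Nat.isBigO_primeCounting_two_mul_card_filter_Ioc
    simp only [Function.comp, ← Nat.sum_primesLE_add_sum_filter_Ioc f (by omega : x ≤ 2 * x)]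
    ring
  filter_upwards [hinterval.bound (half_pos hc), eventually_ge_atTop 1] with x hx hx1
  obtain ⟨q, hq, hxq, hq2x⟩ := Nat.exists_prime_lt_and_le_two_mul x (by omega)
  have hcard : (0 : ℝ) < #{p ∈ Ioc x (2 * x) | p.Prime} := by
    exact_mod_cast card_pos.2 ⟨q, mem_filter.2 ⟨mem_Ioc.2 ⟨hxq, hq2x⟩, hq⟩⟩
  rw [Real.norm_natCast] at hx
  obtain ⟨p, hp, hfp⟩ := exists_lt_of_sum_lt (f := f) (g := fun _ ↦ c) (calc
    ∑ p ∈ Ioc x (2 * x) with p.Prime, f p ≤ c / 2 * #{p ∈ Ioc x (2 * x) | p.Prime} :=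
      (le_abs_self _).trans hx
    _ < ∑ p ∈ Ioc x (2 * x) with p.Prime, c := by
      rw [sum_const, nsmul_eq_mul]
      nlinarith)
  exact ⟨p, (mem_filter.1 hp).1, (mem_filter.1 hp).2, hfp⟩

/-- If `∑_{p ≤ x} a(p)⁴ ∼ 2π(x)` and `∑_{p ≤ x} a(p)⁶ ∼ 5π(x)`, then for every
sufficiently large `x` there is a prime `p ∈ (x, 2x]` with `a(p)² > 2`; in particular there are
infinitely many primes `p` with `|a(p)| > √2`. -/
theorem infinitely_many_large_values (a : ℕ → ℝ)
    (h4 : (fun x : ℕ => ∑ p ∈ (Finset.range (x + 1)).filter Nat.Prime, (a p) ^ 4)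
        ~[atTop] fun x : ℕ => 2 * (((Finset.range (x + 1)).filter Nat.Prime).card : ℝ))
    (h6 : (fun x : ℕ => ∑ p ∈ (Finset.range (x + 1)).filter Nat.Prime, (a p) ^ 6)
        ~[atTop] fun x : ℕ => 5 * (((Finset.range (x + 1)).filter Nat.Prime).card : ℝ)) :
    (∀ᶠ x : ℕ in atTop, ∃ p ∈ Finset.Ioc x (2 * x), p.Prime ∧ 2 < (a p) ^ 2) ∧
    {p : ℕ | p.Prime ∧ Real.sqrt 2 < |a p|}.Infinite := by
  simp only [← Nat.primesLE_eq_filter_range, Nat.primesLE_card_eq_primeCounting] at h4 h6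
  have hV : (fun x ↦ ∑ p ∈ Nat.primesLE x, (-a p ^ 6 + 2 * a p ^ 4 + 1)) =o[atTop]
      (fun x ↦ (π x : ℝ)) := by
    have h4' := h4.isLittleO.trans_isBigO (isBigO_const_mul_self 2 _ atTop)
    have h6' := h6.isLittleO.trans_isBigO (isBigO_const_mul_self 5 _ atTop)
    refine ((h4'.const_mul_left 2).sub h6').congr_left fun x ↦ ?_
    simp only [Pi.sub_apply, sum_add_distrib, sum_neg_distrib, ← mul_sum, sum_const,
      Nat.primesLE_card_eq_primeCounting, nsmul_eq_mul, mul_one]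
    ring
  have hlarge : ∀ᶠ x : ℕ in atTop, ∃ p ∈ Ioc x (2 * x), p.Prime ∧ 2 < a p ^ 2 := by
    filter_upwards [eventually_exists_prime_mem_Ioc_lt one_pos hV] with x ⟨p, hp, hprime, hVp⟩
    refine ⟨p, hp, hprime, ?_⟩
    nlinarith [pow_nonneg (sq_nonneg (a p)) 2]
  refine ⟨hlarge, Set.infinite_of_forall_exists_gt fun n ↦ ?_⟩
  obtain ⟨x, ⟨p, hp, hprime, hap⟩, hnx⟩ := (hlarge.and (eventually_ge_atTop n)).exists
  refine ⟨p, ⟨hprime, ?_⟩, hnx.trans_lt (mem_Ioc.1 hp).1⟩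
  simpa only [Real.sqrt_sq_eq_abs] using Real.sqrt_lt_sqrt zero_le_two hap
end

section
/- Suppose b : primes → ℝ satisfies ∑_{x<p≤2x} b(p) = o(x/log x), ∑_{x<p≤2x} b(p)² ∼ x/log x, and ∑_{x<p≤2x} b(p)³ ∼ x/log x as x → ∞. Then for every sufficiently large x the interval (x, 2x] contains a prime p with b(p) < 0. -/
open Finset Filter Asymptotics

/-!
If `b ≥ 0` on the primes of `(x, 2x]`, Cauchy–Schwarz with `(b²)² = b · b³` gives
`(∑ b²)² ≤ (∑ b) (∑ b³)`. The hypotheses make the left side `∼ (x / log x)²` and the right side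
`o((x / log x)²)`, which is impossible for large `x`.
-/

theorem Finset.sq_sum_sq_le_sum_mul_sum_pow_three {ι : Type*} (s : Finset ι) {f : ι → ℝ}
    (hf : ∀ i ∈ s, 0 ≤ f i) :
    (∑ i ∈ s, f i ^ 2) ^ 2 ≤ (∑ i ∈ s, f i) * ∑ i ∈ s, f i ^ 3 :=
  sum_sq_le_sum_mul_sum_of_sq_le_mul s hf (fun i hi => pow_nonneg (hf i hi) 3)
    fun i _ => (by ring : (f i ^ 2) ^ 2 = f i * f i ^ 3).le

theorem Asymptotics.eventually_mul_lt_sq {α : Type*} {l : Filter α} {u v w g : α → ℝ}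
    (hg : ∀ᶠ x in l, 0 < g x) (hu : u =o[l] g) (hv : v ~[l] g) (hw : w ~[l] g) :
    ∀ᶠ x in l, u x * w x < v x ^ 2 := by
  have huw : (fun x => u x * w x) =o[l] fun x => v x * v x :=
    (hu.mul_isBigO hw.isBigO).trans_isEquivalent (hv.mul hv).symm
  filter_upwards [huw.bound one_half_pos, hv.eventually_pos hg] with x hx hvx
  rw [Real.norm_eq_abs, Real.norm_of_nonneg (mul_self_nonneg _)] at hx
  nlinarith [le_abs_self (u x * w x)]

/-- If `∑_{x<p≤2x} b(p) = o(x/log x)`, `∑_{x<p≤2x} b(p)² ∼ x/log x`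
and `∑_{x<p≤2x} b(p)³ ∼ x/log x`, then every interval `(x, 2x]` with `x` sufficiently
large contains a prime `p` with `b(p) < 0`. -/
theorem negative_value_in_dyadic_interval (b : ℕ → ℝ)
    (h1 : (fun x : ℕ => ∑ p ∈ (Finset.Ioc x (2 * x)).filter Nat.Prime, b p)
        =o[atTop] fun x : ℕ => (x : ℝ) / Real.log x)
    (h2 : (fun x : ℕ => ∑ p ∈ (Finset.Ioc x (2 * x)).filter Nat.Prime, (b p) ^ 2)
        ~[atTop] fun x : ℕ => (x : ℝ) / Real.log x)
    (h3 : (fun x : ℕ => ∑ p ∈ (Finset.Ioc x (2 * x)).filter Nat.Prime, (b p) ^ 3)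
        ~[atTop] fun x : ℕ => (x : ℝ) / Real.log x) :
    ∀ᶠ x : ℕ in atTop, ∃ p ∈ Finset.Ioc x (2 * x), p.Prime ∧ b p < 0 := by
  have hpos : ∀ᶠ x : ℕ in atTop, 0 < (x : ℝ) / Real.log x := by
    filter_upwards [eventually_ge_atTop 2] with x hx
    have hx1 : (1 : ℝ) < x := by exact_mod_cast hx
    exact div_pos (by linarith) (Real.log_pos hx1)
  filter_upwards [eventually_mul_lt_sq hpos h1 h2 h3] with x hx
  by_contra! hnonneg
  refine hx.not_ge (sq_sum_sq_le_sum_mul_sum_pow_three _ fun p hp => ?_)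
  rw [mem_filter] at hp
  exact hnonneg p hp.1 hp.2
end

section
/- Suppose a : primes → ℝ satisfies ∑_{p≤x} a(p)² ∼ π(x), ∑_{p≤x} a(p)⁴ ∼ 2π(x), and ∑_{p≤x} a(p)⁶ ∼ 5π(x). Then liminf_{x→∞} #{p ≤ x : 1 < |a(p)| < 2}/π(x) ≥ 1/6.065 > 0.1648. -/
open Finset Filter Asymptotics

/-!
The polynomial `g(t) = t²(1 - t²)(t² - 4) = -t⁶ + 5t⁴ - 4t²` is nonpositive outside `1 < |t| < 2`
and never exceeds `6.065`, so `∑_{p ≤ x} g(a(p)) ≤ 6.065 · #{p ≤ x : 1 < |a(p)| < 2}`. By the moment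
hypotheses the left side is `∼ -5π(x) + 5 · 2π(x) - 4π(x) = π(x)`, which bounds the density from
below by `1 / 6.065`.
-/

def momentPoly (t : ℝ) : ℝ := t ^ 2 * (1 - t ^ 2) * (t ^ 2 - 4)

lemma momentPoly_eq (t : ℝ) : momentPoly t = -t ^ 6 + 5 * t ^ 4 - 4 * t ^ 2 := by
  unfold momentPoly; ring

lemma momentPoly_nonpos {t : ℝ} (ht : ¬(1 < |t| ∧ |t| < 2)) : momentPoly t ≤ 0 := by
  have hsq : t ^ 2 = |t| ^ 2 := (sq_abs t).symm
  have h : (1 - t ^ 2) * (t ^ 2 - 4) ≤ 0 := by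
    rcases le_or_gt |t| 1 with h1 | h1
    · have : t ^ 2 ≤ 1 := by nlinarith [abs_nonneg t]
      nlinarith
    · have : 4 ≤ t ^ 2 := by nlinarith [not_and.mp ht h1]
      nlinarith
  unfold momentPoly
  rw [mul_assoc]
  exact mul_nonpos_of_nonneg_of_nonpos (sq_nonneg t) h

lemma momentPoly_le (t : ℝ) : momentPoly t ≤ 6.065 := by
  rw [momentPoly_eq]
  have hu : 0 ≤ t ^ 2 := sq_nonneg t
  -- with `u = t²`, `6.065 - g ≈ (u - 2.8685)²(u + 0.737) + 0.00075 - 0.00012 u`, positive for `u ≤ 4`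
  rcases le_or_gt (t ^ 2) 4 with h | h
  · nlinarith [mul_nonneg (sq_nonneg (t ^ 2 - 2.8685)) (by linarith : (0 : ℝ) ≤ t ^ 2 + 0.737)]
  · nlinarith [mul_nonneg (mul_nonneg hu (by linarith : (0 : ℝ) ≤ t ^ 2 - 1))
      (by linarith : (0 : ℝ) ≤ t ^ 2 - 4)]

lemma momentPoly_le_ite (t : ℝ) :
    momentPoly t ≤ if 1 < |t| ∧ |t| < 2 then 6.065 else 0 := by
  split_ifs with ht
  · exact momentPoly_le t
  · exact momentPoly_nonpos ht

lemma sum_momentPoly_le_card {ι : Type*} (s : Finset ι) (a : ι → ℝ) :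
    ∑ p ∈ s, momentPoly (a p) ≤ 6.065 * #{p ∈ s | 1 < |a p| ∧ |a p| < 2} := by
  classical
  calc ∑ p ∈ s, momentPoly (a p)
      ≤ ∑ p ∈ s, if 1 < |a p| ∧ |a p| < 2 then (6.065 : ℝ) else 0 :=
        sum_le_sum fun p _ => momentPoly_le_ite (a p)
    _ = 6.065 * #{p ∈ s | 1 < |a p| ∧ |a p| < 2} := by
        rw [← sum_filter, sum_const, nsmul_eq_mul, mul_comm]

lemma sum_momentPoly_eq {ι : Type*} (s : Finset ι) (a : ι → ℝ) :
    ∑ p ∈ s, momentPoly (a p) =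
      -∑ p ∈ s, a p ^ 6 + 5 * ∑ p ∈ s, a p ^ 4 - 4 * ∑ p ∈ s, a p ^ 2 := by
  simp only [momentPoly_eq, sum_add_distrib, sum_sub_distrib, sum_neg_distrib, mul_sum]

lemma isEquivalent_moment_combination {α : Type*} {l : Filter α} {P S₂ S₄ S₆ : α → ℝ}
    (h₂ : S₂ ~[l] P) (h₄ : S₄ ~[l] fun x => 2 * P x) (h₆ : S₆ ~[l] fun x => 5 * P x) :
    (fun x => -S₆ x + 5 * S₄ x - 4 * S₂ x) ~[l] P := by
  have hP : P =O[l] P := isBigO_refl P l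
  have e₂ : (fun x => S₂ x - P x) =o[l] P := h₂
  have e₄ : (fun x => S₄ x - 2 * P x) =o[l] P := h₄.isLittleO.trans_isBigO (hP.const_mul_left 2)
  have e₆ : (fun x => S₆ x - 5 * P x) =o[l] P := h₆.isLittleO.trans_isBigO (hP.const_mul_left 5)
  refine ((e₆.neg_left.add (e₄.const_mul_left 5)).sub (e₂.const_mul_left 4)).congr_left ?_
  intro x
  simp only [Pi.sub_apply]
  ring

lemma le_liminf_div_of_isEquivalent {α : Type*} {l : Filter α} [l.NeBot] {f N P : α → ℝ}
    {c : ℝ} (hc : 0 < c) (hfP : f ~[l] P) (hP : ∀ᶠ x in l, 0 < P x)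
    (hfN : ∀ᶠ x in l, f x ≤ c * N x) (hNP : ∀ᶠ x in l, N x ≤ P x) :
    1 / c ≤ l.liminf fun x => N x / P x := by
  have hlim : Tendsto (fun x => f x / P x / c) l (nhds (1 / c)) :=
    ((isEquivalent_iff_tendsto_one (hP.mono fun _ h => h.ne')).mp hfP).div_const c
  have hbdd : IsBoundedUnder (· ≤ ·) l fun x => N x / P x :=
    isBoundedUnder_of_eventually_le (a := 1) <| (hP.and hNP).mono fun _ h =>
      (div_le_one h.1).mpr h.2
  rw [← hlim.liminf_eq]
  refine liminf_le_liminf ?_ hlim.isBoundedUnder_ge hbdd.isCoboundedUnder_ge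
  filter_upwards [hP, hfN] with x hPx hfNx
  rw [div_div, div_le_div_iff₀ (by positivity) hPx]
  nlinarith

/-- If `∑_{p≤x} a(p)² ∼ π(x)`, `∑_{p≤x} a(p)⁴ ∼ 2π(x)` and
`∑_{p≤x} a(p)⁶ ∼ 5π(x)`, then
`liminf #{p ≤ x : 1 < |a(p)| < 2}/π(x) ≥ 1/6.065 > 0.1648`. -/
theorem density_one_to_two (a : ℕ → ℝ)
    (h2 : (fun x : ℕ => ∑ p ∈ (Finset.range (x + 1)).filter Nat.Prime, (a p) ^ 2)
        ~[atTop] fun x : ℕ => (((Finset.range (x + 1)).filter Nat.Prime).card : ℝ))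
    (h4 : (fun x : ℕ => ∑ p ∈ (Finset.range (x + 1)).filter Nat.Prime, (a p) ^ 4)
        ~[atTop] fun x : ℕ => 2 * (((Finset.range (x + 1)).filter Nat.Prime).card : ℝ))
    (h6 : (fun x : ℕ => ∑ p ∈ (Finset.range (x + 1)).filter Nat.Prime, (a p) ^ 6)
        ~[atTop] fun x : ℕ => 5 * (((Finset.range (x + 1)).filter Nat.Prime).card : ℝ)) :
    (1 : ℝ) / 6.065 ≤
      atTop.liminf (fun x : ℕ =>
        (((Finset.range (x + 1)).filter
            (fun p => p.Prime ∧ 1 < |a p| ∧ |a p| < 2)).card : ℝ) /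
          (((Finset.range (x + 1)).filter Nat.Prime).card : ℝ)) ∧
    (0.1648 : ℝ) < 1 / 6.065 := by
  refine ⟨le_liminf_div_of_isEquivalent (f := fun x => ∑ p ∈ (range (x + 1)).filter Nat.Prime,
    momentPoly (a p)) (by norm_num) ?_ ?_ ?_ ?_, by norm_num⟩
  · exact (isEquivalent_moment_combination h2 h4 h6).congr_left
      (Eventually.of_forall fun x => (sum_momentPoly_eq _ a).symm)
  · filter_upwards [eventually_ge_atTop 2] with x hx
    exact_mod_cast card_pos.mpr ⟨2, mem_filter.mpr ⟨mem_range.mpr (by omega), Nat.prime_two⟩⟩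
  · refine Eventually.of_forall fun x => ?_
    rw [← filter_filter]
    exact sum_momentPoly_le_card _ a
  · refine Eventually.of_forall fun x => ?_
    rw [← filter_filter]
    exact_mod_cast card_le_card (filter_subset _ _)
end

section
/- Let a : ℕ → ℝ be multiplicative with a(q) < 0 for some prime q, and suppose there are infinitely many squarefree integers m with a(m) > c₁ exp(c log m / log log m) for fixed constants c, c₁ > 0. Then a(n) = Ω₋(exp(c' log n / log log n)) for some c' > 0; i.e., there are infinitely many n with a(n) < −c₂ exp(c' log n / log log n) for some c₂ > 0. -/
/-!
Take a large squarefree `m` with `a m > c₁ exp (c log m / log log m)`. If `q ∤ m`, then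
`a (q m) = a q · a m` is very negative; if `q ∣ m`, then `m / q` is coprime to `q` and
`a (m / q) = a m / a q` is very negative. In both cases the smaller argument `x` and the larger
one `y` satisfy `y ≤ x²` once `m` is large, and on such a range `log x / log log x` changes by at
most a factor `2`, which costs only the passage from `c` to `c / 2`.
-/

open Real

lemma exp_two_lt_eight : exp 2 < 8 := by
  have := exp_one_lt_d9
  rw [show (2 : ℝ) = 1 + 1 by norm_num, exp_add]
  nlinarith [exp_pos 1]

lemma div_log_le_two_mul_div_log {L M : ℝ} (hL : 1 < L) (hLM : L ≤ M) (hM : M ≤ 2 * L) :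
    M / log M ≤ 2 * (L / log L) := by
  have hlogL : 0 < log L := log_pos hL
  calc M / log M ≤ M / log L :=
        div_le_div_of_nonneg_left (by linarith) hlogL (log_le_log (by linarith) hLM)
    _ ≤ 2 * L / log L := div_le_div_of_nonneg_right hM hlogL.le
    _ = 2 * (L / log L) := mul_div_assoc _ _ _

lemma div_log_le_two_mul_div_log_of_two_le {L M : ℝ} (hL : 2 ≤ L) (hLM : L ≤ M)
    (hM : M ≤ 2 * L) : L / log L ≤ 2 * (M / log M) := by
  have hlogL : 0 < log L := log_pos (by linarith)
  have hlogLM : log L ≤ log M := log_le_log (by linarith) hLM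
  have hlogM : log M ≤ 2 * log L :=
    calc log M ≤ log (L ^ 2) := log_le_log (by linarith) (by nlinarith)
      _ = 2 * log L := by rw [log_pow]; norm_num
  calc L / log L ≤ M / log L := div_le_div_of_nonneg_right hLM hlogL.le
    _ ≤ M / (log M / 2) := div_le_div_of_nonneg_left (by linarith) (by linarith) (by linarith)
    _ = 2 * (M / log M) := by rw [div_div_eq_mul_div, mul_comm, mul_div_assoc]

lemma log_le_log_of_le_sq {x y : ℝ} (hx : 1 ≤ x) (hxy : x ≤ y) (hy : y ≤ x ^ 2) :
    log x ≤ log y ∧ log y ≤ 2 * log x := by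
  refine ⟨log_le_log (by linarith) hxy, ?_⟩
  calc log y ≤ log (x ^ 2) := log_le_log (by linarith) hy
    _ = 2 * log x := by rw [log_pow]; norm_num

lemma exp_half_log_div_log_log_le {c x y : ℝ} (hc : 0 ≤ c) (hx : exp 1 < x) (hxy : x ≤ y)
    (hy : y ≤ x ^ 2) :
    exp (c / 2 * log y / log (log y)) ≤ exp (c * log x / log (log x)) := by
  have hx1 : 1 ≤ x := le_trans (by linarith [add_one_le_exp 1]) hx.le
  obtain ⟨hxy', hy'⟩ := log_le_log_of_le_sq hx1 hxy hy
  have hlogx : 1 < log x := by rwa [lt_log_iff_exp_lt (by linarith)]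
  have h := div_log_le_two_mul_div_log hlogx hxy' hy'
  rw [exp_le_exp, mul_div_assoc, mul_div_assoc]
  calc c / 2 * (log y / log (log y)) ≤ c / 2 * (2 * (log x / log (log x))) := by gcongr
    _ = c * (log x / log (log x)) := by ring

lemma exp_half_log_div_log_log_le' {c x y : ℝ} (hc : 0 ≤ c) (hx : exp 2 ≤ x) (hxy : x ≤ y)
    (hy : y ≤ x ^ 2) :
    exp (c / 2 * log x / log (log x)) ≤ exp (c * log y / log (log y)) := by
  have hx1 : 1 ≤ x := le_trans (by linarith [add_one_le_exp 2]) hx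
  obtain ⟨hxy', hy'⟩ := log_le_log_of_le_sq hx1 hxy hy
  have hlogx : 2 ≤ log x := by rwa [le_log_iff_exp_le (by linarith)]
  have h := div_log_le_two_mul_div_log_of_two_le hlogx hxy' hy'
  rw [exp_le_exp, mul_div_assoc, mul_div_assoc]
  calc c / 2 * (log x / log (log x)) ≤ c / 2 * (2 * (log y / log (log y))) := by gcongr
    _ = c * (log y / log (log y)) := by ring

section Multiplicative

variable {a : ℕ → ℝ} {c c₁ : ℝ} {q : ℕ}

lemma mul_lt_neg_exp_half_of_coprime
    (hmult : ∀ m n : ℕ, Nat.Coprime m n → a (m * n) = a m * a n)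
    (hc : 0 ≤ c) (hc₁ : 0 ≤ c₁) (hqneg : a q < 0) {m : ℕ} (hqm : Nat.Coprime q m)
    (hm : 3 ≤ m) (hq : 1 ≤ q) (hqm_le : q ≤ m)
    (ham : c₁ * exp (c * log m / log (log m)) < a m) :
    a (q * m) < -(c₁ * -a q) *
      exp (c / 2 * log ((q * m : ℕ) : ℝ) / log (log ((q * m : ℕ) : ℝ))) := by
  have hm' : (3 : ℝ) ≤ m := by exact_mod_cast hm
  have hq' : (1 : ℝ) ≤ q := by exact_mod_cast hq
  have hqm' : (q : ℝ) ≤ m := by exact_mod_cast hqm_le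
  have hgrowth := exp_half_log_div_log_log_le (x := m) (y := q * m) hc
    (by linarith [exp_one_lt_d9]) (by nlinarith) (by nlinarith)
  rw [hmult q m hqm]
  push_cast
  calc a q * a m < a q * (c₁ * exp (c * log m / log (log m))) :=
        mul_lt_mul_of_neg_left ham hqneg
    _ = -(c₁ * -a q) * exp (c * log m / log (log m)) := by ring
    _ ≤ -(c₁ * -a q) * exp (c / 2 * log (q * m) / log (log (q * m))) := by
        rw [neg_mul, neg_mul, neg_le_neg_iff]
        exact mul_le_mul_of_nonneg_left hgrowth (mul_nonneg hc₁ (by linarith))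

lemma lt_neg_exp_half_of_coprime_mul
    (hmult : ∀ m n : ℕ, Nat.Coprime m n → a (m * n) = a m * a n)
    (hc : 0 ≤ c) (hc₁ : 0 ≤ c₁) (hqneg : a q < 0) {k : ℕ} (hqk : Nat.Coprime q k)
    (hk : 8 ≤ k) (hq : 1 ≤ q) (hqk_le : q ≤ k)
    (ham : c₁ * exp (c * log ((q * k : ℕ) : ℝ) / log (log ((q * k : ℕ) : ℝ))) <
      a (q * k)) :
    a k < -(c₁ / -a q) * exp (c / 2 * log k / log (log k)) := by
  have hk' : (8 : ℝ) ≤ k := by exact_mod_cast hk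
  have hq' : (1 : ℝ) ≤ q := by exact_mod_cast hq
  have hqk' : (q : ℝ) ≤ k := by exact_mod_cast hqk_le
  have hgrowth := exp_half_log_div_log_log_le' (x := k) (y := q * k) hc
    (by linarith [exp_two_lt_eight]) (by nlinarith) (by nlinarith)
  rw [hmult q k hqk] at ham
  push_cast at ham
  calc a k < c₁ * exp (c * log (q * k) / log (log (q * k))) / a q := by
        rw [lt_div_iff_of_neg hqneg]; linarith
    _ = -(c₁ / -a q) * exp (c * log (q * k) / log (log (q * k))) := by
        field_simp
    _ ≤ -(c₁ / -a q) * exp (c / 2 * log k / log (log k)) := by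
        rw [neg_mul, neg_mul, neg_le_neg_iff]
        exact mul_le_mul_of_nonneg_left hgrowth (div_nonneg hc₁ (by linarith))

end Multiplicative

theorem omega_minus_result_general (a : ℕ → ℝ) (c c₁ : ℝ) (hc : 0 < c) (hc₁ : 0 < c₁)
    (hmult : ∀ m n : ℕ, Nat.Coprime m n → a (m * n) = a m * a n)
    (q : ℕ) (hq : q.Prime) (hqneg : a q < 0)
    (hinf : {m : ℕ | Squarefree m ∧
        c₁ * Real.exp (c * Real.log m / Real.log (Real.log m)) < a m}.Infinite) :
    ∃ c' > 0, ∃ c₂ > 0, ∀ N : ℕ, ∃ n ≥ N,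
      a n < -c₂ * Real.exp (c' * Real.log n / Real.log (Real.log n)) := by
  have hq1 : 1 ≤ q := hq.one_lt.le
  have hneg : 0 < -a q := by linarith
  refine ⟨c / 2, by positivity, min (c₁ * -a q) (c₁ / -a q), by positivity, fun N => ?_⟩
  obtain ⟨m, ⟨hsf, ham⟩, hm⟩ := hinf.exists_gt (q * (N + q + 8))
  by_cases hqm : q ∣ m
  · obtain ⟨k, rfl⟩ := hqm
    have hk : N + q + 8 < k := Nat.lt_of_mul_lt_mul_left hm
    refine ⟨k, by omega, (lt_neg_exp_half_of_coprime_mul hmult hc.le hc₁.le hqneg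
      (Nat.coprime_of_squarefree_mul hsf) (by omega) hq1 (by omega) ham).trans_le ?_⟩
    gcongr
    exact min_le_right _ _
  · have hm' : N + q + 8 < m := lt_of_le_of_lt (Nat.le_mul_of_pos_left _ hq.pos) hm
    refine ⟨q * m, by nlinarith, (mul_lt_neg_exp_half_of_coprime hmult hc.le hc₁.le hqneg
      ((Nat.Prime.coprime_iff_not_dvd hq).mpr hqm) (by omega) hq1 (by omega) ham).trans_le ?_⟩
    gcongr
    exact min_le_left _ _

/-- If `a` is multiplicative, `a(q) < 0` for some prime `q`, and there are
infinitely many squarefree `m` with `a(m) > c₁ exp(c log m / log log m)`, then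
`a(n) = Ω₋(exp(c' log n / log log n))` for some `c' > 0`. -/
theorem omega_minus_result (a : ℕ → ℝ) (c c₁ : ℝ) (hc : 0 < c) (hc₁ : 0 < c₁)
    (hone : a 1 = 1)
    (hmult : ∀ m n : ℕ, Nat.Coprime m n → a (m * n) = a m * a n)
    (q : ℕ) (hq : q.Prime) (hqneg : a q < 0)
    (hinf : {m : ℕ | Squarefree m ∧
        c₁ * Real.exp (c * Real.log m / Real.log (Real.log m)) < a m}.Infinite) :
    ∃ c' > 0, ∃ c₂ > 0, ∀ N : ℕ, ∃ n ≥ N,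
      a n < -c₂ * Real.exp (c' * Real.log n / Real.log (Real.log n)) :=
  omega_minus_result_general a c c₁ hc hc₁ hmult q hq hqneg hinf
end
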